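/- arXiv:2405.08740 — 4 statements merged into one kernel-verified Lean document; each statement's English description precedes it below -/
import Mathlib

section
/- Let n ≥ 1, let g : Fin n → ℝ, and for each m ∈ (0,1) let e(m) ∈ ℝ be a global minimizer over ℝ of the expectile loss L_m(x) = ∑_{i} w_i(x)·(g_i − x)², where w_i(x) = 1−m if g_i − x < 0 and w_i(x) = m otherwise. Then e(m) tends to max_{i} g_i as m tends to 1 from the left, i.e. Tendsto e (𝓝[<] 1) (𝓝 (max_i g_i)). -/
/-!
At the sample maximum `M` every residual is `≤ 0`, so the loss there is `(1 - m) * C` with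
`C = ∑ (g i - M) ^ 2`, and to the right of `M` the loss only grows; hence a minimizer `e` satisfies
`e ≤ M`. The residual of a maximal sample point at `e` is then `≥ 0` and carries weight `m`, so
`m * (M - e) ^ 2 ≤ (1 - m) * C`, which forces `e → M` as `m → 1⁻`.
-/

open Finset Filter Topology

namespace Expectile

variable {ι : Type*} [Fintype ι]

noncomputable def loss (g : ι → ℝ) (m x : ℝ) : ℝ :=
  ∑ i, (if g i - x < 0 then 1 - m else m) * (g i - x) ^ 2

theorem loss_of_forall_le {g : ι → ℝ} {x : ℝ} (hx : ∀ i, g i ≤ x) (m : ℝ) :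
    loss g m x = (1 - m) * ∑ i, (g i - x) ^ 2 := by
  rw [loss, mul_sum]
  refine sum_congr rfl fun i _ => ?_
  rcases (hx i).lt_or_eq with hlt | heq
  · rw [if_pos (sub_neg.mpr hlt)]
  · simp [heq]

theorem sum_sq_sub_lt_of_lt [Nonempty ι] {g : ι → ℝ} {M x : ℝ} (hM : ∀ i, g i ≤ M)
    (hx : M < x) : ∑ i, (g i - M) ^ 2 < ∑ i, (g i - x) ^ 2 :=
  sum_lt_sum_of_nonempty univ_nonempty fun i _ => by nlinarith [hM i]

theorem loss_lt_of_forall_le_of_lt [Nonempty ι] {g : ι → ℝ} {m M x : ℝ} (hm : m < 1)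
    (hM : ∀ i, g i ≤ M) (hx : M < x) : loss g m M < loss g m x := by
  rw [loss_of_forall_le hM, loss_of_forall_le fun i => (hM i).trans hx.le]
  exact mul_lt_mul_of_pos_left (sum_sq_sub_lt_of_lt hM hx) (sub_pos.mpr hm)

theorem le_of_isMinOn [Nonempty ι] {g : ι → ℝ} {m M e : ℝ} (hm : m < 1)
    (he : IsMinOn (loss g m) Set.univ e) (hM : ∀ i, g i ≤ M) : e ≤ M :=
  not_lt.mp fun hlt => (loss_lt_of_forall_le_of_lt hm hM hlt).not_ge (he (Set.mem_univ M))

theorem mul_sq_le_loss {g : ι → ℝ} {m x : ℝ} (hm : m ∈ Set.Icc (0 : ℝ) 1) {j : ι}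
    (hj : x ≤ g j) : m * (g j - x) ^ 2 ≤ loss g m x := by
  have hterm : m * (g j - x) ^ 2 = (if g j - x < 0 then 1 - m else m) * (g j - x) ^ 2 := by
    rw [if_neg (not_lt.mpr (sub_nonneg.mpr hj))]
  rw [hterm]
  refine single_le_sum (f := fun i => (if g i - x < 0 then 1 - m else m) * (g i - x) ^ 2)
    (fun i _ => mul_nonneg ?_ (sq_nonneg _)) (mem_univ j)
  split_ifs <;> linarith [hm.1, hm.2]

theorem mul_sq_sub_le_of_isMinOn [Nonempty ι] {g : ι → ℝ} {m e : ℝ}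
    (hm : m ∈ Set.Ioo (0 : ℝ) 1) (he : IsMinOn (loss g m) Set.univ e) {j : ι}
    (hj : ∀ i, g i ≤ g j) : m * (g j - e) ^ 2 ≤ (1 - m) * ∑ i, (g i - g j) ^ 2 :=
  calc m * (g j - e) ^ 2 ≤ loss g m e :=
        mul_sq_le_loss (Set.Ioo_subset_Icc_self hm) (le_of_isMinOn hm.2 he hj)
    _ ≤ loss g m (g j) := he (Set.mem_univ (g j))
    _ = (1 - m) * ∑ i, (g i - g j) ^ 2 := loss_of_forall_le hj m

end Expectile

theorem tendsto_nhdsLT_one_of_mul_sq_sub_le {e : ℝ → ℝ} {M C : ℝ}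
    (h : ∀ m ∈ Set.Ioo (0 : ℝ) 1, m * (M - e m) ^ 2 ≤ (1 - m) * C) :
    Tendsto e (𝓝[<] 1) (𝓝 M) := by
  have hbound : ∀ᶠ m in 𝓝[<] (1 : ℝ), |e m - M| ≤ √((1 - m) / m * C) := by
    filter_upwards [Ioo_mem_nhdsLT (zero_lt_one' ℝ)] with m hm
    rw [← Real.sqrt_sq_eq_abs, sub_sq_comm]
    refine Real.sqrt_le_sqrt ?_
    rw [div_mul_eq_mul_div, le_div_iff₀' hm.1]
    exact h m hm
  have hlim : Tendsto (fun m : ℝ => √((1 - m) / m * C)) (𝓝[<] 1) (𝓝 0) := by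
    have hcont : ContinuousAt (fun m : ℝ => √((1 - m) / m * C)) 1 := by fun_prop (disch := norm_num)
    simpa using hcont.tendsto.mono_left nhdsWithin_le_nhds
  exact tendsto_iff_norm_sub_tendsto_zero.mpr (squeeze_zero' (.of_forall fun _ => norm_nonneg _)
    hbound hlim)

/-- The m-expectile of a finite sample converges to the sample maximum as m → 1⁻. -/
theorem expectile_tendsto_max (n : ℕ) (hn : 1 ≤ n) (g : Fin n → ℝ) (e : ℝ → ℝ)
    (he : ∀ m ∈ Set.Ioo (0 : ℝ) 1, ∀ x : ℝ,
      (∑ i, (if g i - e m < 0 then 1 - m else m) * (g i - e m) ^ 2) ≤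
        ∑ i, (if g i - x < 0 then 1 - m else m) * (g i - x) ^ 2) :
    Tendsto e (nhdsWithin 1 (Set.Iio 1))
      (nhds (Finset.univ.sup' (Finset.univ_nonempty_iff.mpr (Fin.pos_iff_nonempty.mp hn)) g)) := by
  have : Nonempty (Fin n) := Fin.pos_iff_nonempty.mp hn
  obtain ⟨j, -, hj⟩ := exists_mem_eq_sup' univ_nonempty g
  rw [hj]
  have hmax : ∀ i, g i ≤ g j := fun i => hj ▸ le_sup' g (mem_univ i)
  exact tendsto_nhdsLT_one_of_mul_sq_sub_le fun m hm =>
    Expectile.mul_sq_sub_le_of_isMinOn hm (isMinOn_univ_iff.mpr (he m hm)) hmax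
end

section
/- Let n ≥ 1 and g : Fin n → ℝ. For m₁, m₂ with 0 < m₁ < m₂ < 1, if x₁ is a global minimizer of the expectile loss L_{m₁} and x₂ is a global minimizer of L_{m₂}, where L_m(x) = ∑_{i} w_i(x)·(g_i − x)² with w_i(x) = 1−m if g_i − x < 0 and w_i(x) = m otherwise, then x₁ ≤ x₂. -/
open Finset

/-! The loss splits as `L_m(x) = B(x) + m * D(x)` with `B(x) = ∑ (min (g i - x) 0)²` and
`D(x) = ∑ (g i - x) |g i - x|`. Adding the two minimality inequalities, the `B` terms cancel and
`(m₂ - m₁) (D x₂ - D x₁) ≤ 0`; since `t ↦ t |t|` is strictly increasing, `D` is strictly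
decreasing, so `x₁ ≤ x₂`. -/

lemma strictMono_mul_abs_self : StrictMono fun t : ℝ => t * |t| := by
  intro a b hab
  rcases abs_cases a with ⟨ha, _⟩ | ⟨ha, _⟩ <;> rcases abs_cases b with ⟨hb, _⟩ | ⟨hb, _⟩ <;>
    simp only [ha, hb] <;> nlinarith

lemma strictAnti_sum_sub_mul_abs {ι : Type*} [Fintype ι] [Nonempty ι] (g : ι → ℝ) :
    StrictAnti fun x : ℝ => ∑ i, (g i - x) * |g i - x| :=
  fun _ _ hxy => sum_lt_sum_of_nonempty univ_nonempty fun i _ =>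
    strictMono_mul_abs_self (sub_lt_sub_left hxy (g i))

lemma expectile_weight_mul_sq (m t : ℝ) :
    (if t < 0 then 1 - m else m) * t ^ 2 = min t 0 ^ 2 + m * (t * |t|) := by
  split_ifs with ht
  · rw [min_eq_left ht.le, abs_of_neg ht]; ring
  · rw [min_eq_right (not_lt.mp ht), abs_of_nonneg (not_lt.mp ht)]; ring

lemma sum_expectile_loss_eq {ι : Type*} [Fintype ι] (g : ι → ℝ) (m x : ℝ) :
    ∑ i, (if g i - x < 0 then 1 - m else m) * (g i - x) ^ 2 =
      ∑ i, min (g i - x) 0 ^ 2 + m * ∑ i, (g i - x) * |g i - x| := by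
  simp only [expectile_weight_mul_sq, sum_add_distrib, mul_sum]

lemma le_of_minimizers_add_mul_strictAnti {α : Type*} [LinearOrder α] {B D : α → ℝ}
    (hD : StrictAnti D) {m₁ m₂ : ℝ} (hm : m₁ < m₂) {x₁ x₂ : α}
    (h₁ : B x₁ + m₁ * D x₁ ≤ B x₂ + m₁ * D x₂) (h₂ : B x₂ + m₂ * D x₂ ≤ B x₁ + m₂ * D x₁) :
    x₁ ≤ x₂ :=
  hD.le_iff_ge.mp (by nlinarith)

theorem expectile_monotone_general (n : ℕ) (hn : 1 ≤ n) (g : Fin n → ℝ) (m₁ m₂ : ℝ)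
    (hm₁₂ : m₁ < m₂) (x₁ x₂ : ℝ)
    (h₁ : ∀ x : ℝ,
      (∑ i, (if g i - x₁ < 0 then 1 - m₁ else m₁) * (g i - x₁) ^ 2) ≤
        ∑ i, (if g i - x < 0 then 1 - m₁ else m₁) * (g i - x) ^ 2)
    (h₂ : ∀ x : ℝ,
      (∑ i, (if g i - x₂ < 0 then 1 - m₂ else m₂) * (g i - x₂) ^ 2) ≤
        ∑ i, (if g i - x < 0 then 1 - m₂ else m₂) * (g i - x) ^ 2) :
    x₁ ≤ x₂ := by
  have : Nonempty (Fin n) := ⟨⟨0, hn⟩⟩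
  have h₁₂ := h₁ x₂
  have h₂₁ := h₂ x₁
  rw [sum_expectile_loss_eq, sum_expectile_loss_eq] at h₁₂ h₂₁
  exact le_of_minimizers_add_mul_strictAnti (B := fun x => ∑ i, min (g i - x) 0 ^ 2)
    (strictAnti_sum_sub_mul_abs g) hm₁₂ h₁₂ h₂₁

/-- Monotonicity of expectiles in the parameter m. -/
theorem expectile_monotone (n : ℕ) (hn : 1 ≤ n) (g : Fin n → ℝ) (m₁ m₂ : ℝ)
    (hm₁ : 0 < m₁) (hm₁₂ : m₁ < m₂) (hm₂ : m₂ < 1) (x₁ x₂ : ℝ)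
    (h₁ : ∀ x : ℝ,
      (∑ i, (if g i - x₁ < 0 then 1 - m₁ else m₁) * (g i - x₁) ^ 2) ≤
        ∑ i, (if g i - x < 0 then 1 - m₁ else m₁) * (g i - x) ^ 2)
    (h₂ : ∀ x : ℝ,
      (∑ i, (if g i - x₂ < 0 then 1 - m₂ else m₂) * (g i - x₂) ^ 2) ≤
        ∑ i, (if g i - x < 0 then 1 - m₂ else m₂) * (g i - x) ^ 2) :
    x₁ ≤ x₂ :=
  expectile_monotone_general n hn g m₁ m₂ hm₁₂ x₁ x₂ h₁ h₂
end

section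
/- Let n ≥ 1, g : Fin n → ℝ, and m ∈ (0,1). If x is a global minimizer over ℝ of the expectile loss L_m(x) = ∑_{i} w_i(x)·(g_i − x)², where w_i(x) = 1−m if g_i − x < 0 and w_i(x) = m otherwise, then x ≤ max_{i} g_i. -/
open Finset

/-- The m-expectile never exceeds the sample maximum. -/
theorem expectile_le_max (n : ℕ) (hn : 1 ≤ n) (g : Fin n → ℝ) (m : ℝ)
    (hm : m ∈ Set.Ioo (0 : ℝ) 1) (x : ℝ)
    (hx : ∀ y : ℝ,
      (∑ i, (if g i - x < 0 then 1 - m else m) * (g i - x) ^ 2) ≤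
        ∑ i, (if g i - y < 0 then 1 - m else m) * (g i - y) ^ 2) :
    x ≤ Finset.univ.sup' (Finset.univ_nonempty_iff.mpr (Fin.pos_iff_nonempty.mp hn)) g := by
  set M := Finset.univ.sup' (Finset.univ_nonempty_iff.mpr (Fin.pos_iff_nonempty.mp hn)) g with hM
  by_contra h
  push_neg at h
  have hle : ∀ i, g i ≤ M := fun i => Finset.le_sup' g (mem_univ i)
  have hxif : ∀ i : Fin n, (if g i - x < 0 then 1 - m else m) = 1 - m :=
    fun i => if_pos (by linarith [hle i])
  obtain ⟨i0, -, hi0⟩ :=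
    Finset.exists_mem_eq_sup' (Finset.univ_nonempty_iff.mpr (Fin.pos_iff_nonempty.mp hn)) g
  have key : (∑ i, (if g i - M < 0 then 1 - m else m) * (g i - M) ^ 2) <
      ∑ i, (if g i - x < 0 then 1 - m else m) * (g i - x) ^ 2 := by
    apply Finset.sum_lt_sum (f := fun i => (if g i - M < 0 then 1 - m else m) * (g i - M) ^ 2)
    · intro i _
      rw [hxif i]
      split_ifs with hcond
      · nlinarith [hle i, hm.2, mul_nonneg (le_of_lt (sub_pos.mpr h)) (by linarith [hle i] : (0:ℝ) ≤ x + M - 2 * g i)]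
      · have hgi : g i = M := le_antisymm (hle i) (by linarith)
        rw [hgi]
        simp
        nlinarith [hm.1, hm.2, mul_pos (sub_pos.mpr h) (sub_pos.mpr h)]
    · refine ⟨i0, mem_univ i0, ?_⟩
      rw [hxif i0, ← hi0, ← hM]
      simp
      nlinarith [hm.2, mul_pos (sub_pos.mpr h) (sub_pos.mpr h)]
  linarith [hx M]
end

section
/- Let Ω be a nonempty finite type, let p : Ω → ℝ be strictly positive weights with ∑_{ω} p(ω) = 1, and let g : Ω → ℝ. For each m ∈ (0,1) let e(m) ∈ ℝ be a global minimizer over ℝ of the weighted expectile loss L_m(x) = ∑_{ω} p(ω)·w_ω(x)·(g(ω) − x)², where w_ω(x) = 1−m if g(ω) − x < 0 and w_ω(x) = m otherwise. Then e(m) tends to max_{ω} g(ω) as m tends to 1 from the left. -/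
/-! Let `M = max g = g ω₀`. Right of `M` every residual is nonpositive, so the loss there is
`(1 - m) ∑ p (g - x)²`, strictly increasing in `x`; hence `e(m) ≤ M`. Bounding the loss
at `e(m)` below by the `ω₀` term and above by the loss at `M` gives
`m p(ω₀) (M - e(m))² ≤ (1 - m) ∑ p (g - M)²`, whose right side vanishes as `m → 1`. -/

open Finset Filter Topology

noncomputable def expectileLoss {Ω : Type*} [Fintype Ω] (p g : Ω → ℝ) (m x : ℝ) : ℝ :=
  ∑ ω, p ω * ((if g ω - x < 0 then 1 - m else m) * (g ω - x) ^ 2)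

section ExpectileLoss

variable {Ω : Type*} [Fintype Ω] {p g : Ω → ℝ} {m x e M : ℝ}

theorem expectileLoss_eq_of_forall_le (hx : ∀ ω, g ω ≤ x) :
    expectileLoss p g m x = (1 - m) * ∑ ω, p ω * (g ω - x) ^ 2 := by
  rw [expectileLoss, mul_sum]
  refine sum_congr rfl fun ω _ => ?_
  rcases (hx ω).lt_or_eq with hlt | heq
  · rw [if_pos (sub_neg.mpr hlt)]
    ring
  · simp [heq]

theorem expectileLoss_strictMonoOn [Nonempty Ω] (hp : ∀ ω, 0 < p ω) (hm : m < 1)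
    (hM : ∀ ω, g ω ≤ M) : StrictMonoOn (expectileLoss p g m) (Set.Ici M) := by
  intro x hx y hy hxy
  have hx' : ∀ ω, g ω ≤ x := fun ω => (hM ω).trans hx
  have hy' : ∀ ω, g ω ≤ y := fun ω => (hx' ω).trans hxy.le
  rw [expectileLoss_eq_of_forall_le hx', expectileLoss_eq_of_forall_le hy']
  refine mul_lt_mul_of_pos_left (sum_lt_sum_of_nonempty univ_nonempty fun ω _ => ?_)
    (sub_pos.mpr hm)
  have hsq : (g ω - x) ^ 2 < (g ω - y) ^ 2 := by nlinarith [hx' ω]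
  exact mul_lt_mul_of_pos_left hsq (hp ω)

theorem mul_sq_le_expectileLoss (hp : ∀ ω, 0 ≤ p ω) (hm : m ∈ Set.Icc (0 : ℝ) 1) (ω : Ω)
    (hx : x ≤ g ω) : m * p ω * (g ω - x) ^ 2 ≤ expectileLoss p g m x := by
  have hterm : m * p ω * (g ω - x) ^ 2 =
      p ω * ((if g ω - x < 0 then 1 - m else m) * (g ω - x) ^ 2) := by
    rw [if_neg (not_lt.mpr (sub_nonneg.mpr hx))]
    ring
  rw [hterm]
  refine single_le_sum (f := fun ω => p ω * ((if g ω - x < 0 then 1 - m else m) * (g ω - x) ^ 2))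
    (fun ω _ => mul_nonneg (hp ω) (mul_nonneg ?_ (sq_nonneg _))) (mem_univ ω)
  split_ifs <;> linarith [hm.1, hm.2]

theorem expectile_le_of_forall_le [Nonempty Ω] (hp : ∀ ω, 0 < p ω) (hm : m < 1)
    (hM : ∀ ω, g ω ≤ M) (he : ∀ x, expectileLoss p g m e ≤ expectileLoss p g m x) : e ≤ M := by
  by_contra! h
  exact (expectileLoss_strictMonoOn hp hm hM Set.self_mem_Ici h.le h).not_ge (he M)

theorem mul_sq_sub_expectile_le (hp : ∀ ω, 0 ≤ p ω) (hm : m ∈ Set.Icc (0 : ℝ) 1)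
    (hM : ∀ ω, g ω ≤ M) (he : ∀ x, expectileLoss p g m e ≤ expectileLoss p g m x)
    (ω : Ω) (hω : e ≤ g ω) :
    m * p ω * (g ω - e) ^ 2 ≤ (1 - m) * ∑ ω, p ω * (g ω - M) ^ 2 := calc
  _ ≤ expectileLoss p g m e := mul_sq_le_expectileLoss hp hm ω hω
  _ ≤ expectileLoss p g m M := he M
  _ = _ := expectileLoss_eq_of_forall_le hM

end ExpectileLoss

theorem weighted_expectile_tendsto_max_general (Ω : Type*) [Fintype Ω] [Nonempty Ω]
    (p : Ω → ℝ) (hp : ∀ ω, 0 < p ω) (g : Ω → ℝ) (e : ℝ → ℝ)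
    (he : ∀ m ∈ Set.Ioo (0 : ℝ) 1, ∀ x : ℝ,
      (∑ ω, p ω * ((if g ω - e m < 0 then 1 - m else m) * (g ω - e m) ^ 2)) ≤
        ∑ ω, p ω * ((if g ω - x < 0 then 1 - m else m) * (g ω - x) ^ 2)) :
    Tendsto e (nhdsWithin 1 (Set.Iio 1))
      (nhds (Finset.univ.sup' Finset.univ_nonempty g)) := by
  set M := univ.sup' univ_nonempty g
  obtain ⟨ω₀, -, hω₀⟩ := exists_mem_eq_sup' univ_nonempty g
  have hM : ∀ ω, g ω ≤ M := fun ω => le_sup' g (mem_univ ω)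
  set C := ∑ ω, p ω * (g ω - M) ^ 2
  have hdist : ∀ m ∈ Set.Ioo (0 : ℝ) 1, dist (e m) M ≤ √((1 - m) * C / (m * p ω₀)) := by
    intro m hm
    have hle : e m ≤ g ω₀ := hω₀ ▸ expectile_le_of_forall_le hp hm.2 hM (he m hm)
    have hbound := mul_sq_sub_expectile_le (fun ω => (hp ω).le) (Set.Ioo_subset_Icc_self hm)
      hM (he m hm) ω₀ hle
    rw [← hω₀] at hbound
    rw [Real.dist_eq, abs_sub_comm]
    refine Real.abs_le_sqrt ((le_div_iff₀' (mul_pos hm.1 (hp ω₀))).mpr ?_)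
    linarith
  have hsqrt : Tendsto (fun m : ℝ => √((1 - m) * C / (m * p ω₀))) (𝓝[<] 1) (𝓝 0) := by
    have hcont : ContinuousAt (fun m : ℝ => √((1 - m) * C / (m * p ω₀))) 1 :=
      ((continuousAt_const.sub continuousAt_id).mul continuousAt_const).div
        (continuousAt_id.mul continuousAt_const) (by simpa using (hp ω₀).ne') |>.sqrt
    simpa using hcont.tendsto.mono_left nhdsWithin_le_nhds
  refine tendsto_iff_dist_tendsto_zero.mpr (squeeze_zero' ?_ ?_ hsqrt)
  · exact Eventually.of_forall fun m => dist_nonneg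
  · filter_upwards [Ioo_mem_nhdsLT (show (0 : ℝ) < 1 by norm_num)] with m hm
    exact hdist m hm

/-- Weighted (expectation) form: the m-expectile converges to the in-distribution
maximum as m → 1⁻. -/
theorem weighted_expectile_tendsto_max (Ω : Type*) [Fintype Ω] [Nonempty Ω]
    (p : Ω → ℝ) (hp : ∀ ω, 0 < p ω) (hsum : ∑ ω, p ω = 1) (g : Ω → ℝ) (e : ℝ → ℝ)
    (he : ∀ m ∈ Set.Ioo (0 : ℝ) 1, ∀ x : ℝ,
      (∑ ω, p ω * ((if g ω - e m < 0 then 1 - m else m) * (g ω - e m) ^ 2)) ≤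
        ∑ ω, p ω * ((if g ω - x < 0 then 1 - m else m) * (g ω - x) ^ 2)) :
    Tendsto e (nhdsWithin 1 (Set.Iio 1))
      (nhds (Finset.univ.sup' Finset.univ_nonempty g)) :=
  weighted_expectile_tendsto_max_general Ω p hp g e he
end
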